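/- If λ ∈ Σ is a restricted root with dim 𝔤_λ = 1, then [Z, X] = 0 for every Z ∈ 𝔪 and X ∈ 𝔤_λ. Moreover, if 𝔪 = 0, then every restricted root space 𝔤_λ (λ ∈ Σ) is one-dimensional. -/

import Mathlib

/-- The restricted root space `𝔤_λ = {X ∈ 𝔤 : [H, X] = λ(H) • X for all H ∈ 𝔞}`. -/
def rootSpace' {𝔤 : Type} [LieRing 𝔤] [LieAlgebra ℝ 𝔤]
    (𝔞 : LieSubalgebra ℝ 𝔤) (lam : Module.Dual ℝ 𝔞) : Submodule ℝ 𝔤 where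
  carrier := {X | ∀ H : 𝔞, ⁅(H : 𝔤), X⁆ = lam H • X}
  add_mem' := fun {a b} ha hb H => by rw [lie_add, ha H, hb H, smul_add]
  zero_mem' := fun H => by simp
  smul_mem' := fun t X hX H => by rw [lie_smul, hX H, smul_comm]

/-- The subspace `𝔪 = {Z ∈ 𝔨 : [H, Z] = 0 for all H ∈ 𝔞}`, where `𝔨` is the fixed-point
set of the Cartan involution `σ`. -/
def mSub {𝔤 : Type} [LieRing 𝔤] [LieAlgebra ℝ 𝔤]
    (σ : 𝔤 →ₗ⁅ℝ⁆ 𝔤) (𝔞 : LieSubalgebra ℝ 𝔤) : Submodule ℝ 𝔤 where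
  carrier := {Z | σ Z = Z ∧ ∀ H : 𝔞, ⁅(H : 𝔤), Z⁆ = 0}
  add_mem' := fun {a b} ha hb =>
    ⟨by rw [map_add, ha.1, hb.1], fun H => by rw [lie_add, ha.2 H, hb.2 H, add_zero]⟩
  zero_mem' := ⟨σ.map_zero, fun H => lie_zero _⟩
  smul_mem' := fun t X hX =>
    ⟨by rw [map_smul, hX.1], fun H => by rw [lie_smul, hX.2 H, smul_zero]⟩

/-!
`ad 𝔪` preserves each `𝔤_λ`, so on a one-dimensional `𝔤_λ` every `Z ∈ 𝔪` acts by a real scalar.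
Since `σ Z = Z`, `ad Z` is skew for the inner product `-B(X, σ Y)`, so that scalar is `0`.

If `𝔪 = 0`, maximality of `𝔞` forces `𝔤_0 = 𝔞`. For `0 ≠ X ∈ 𝔤_λ`, the elements `σ X`, `X` and
`[σ X, X] ∈ 𝔞` span a copy of `sl₂`, because `λ([σ X, X]) ≠ 0`. If `Y ∈ 𝔤_λ` is orthogonal to
`σ X`, then `[σ X, Y] ∈ 𝔞` is orthogonal to `𝔞`, hence zero; with `σ X` as raising operator, `Y`
would then be a primitive vector of weight `-2` in the finite-dimensional `sl₂`-module `𝔤`, so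
`Y = 0`. Thus `Y ↦ B(σ X, Y)` is injective on `𝔤_λ`.
-/

lemma eq_zero_of_lie_eq_zero_of_lie_lie_eq_smul {K L M : Type*} [Field K] [CharZero K]
    [LieRing L] [LieAlgebra K L] [AddCommGroup M] [Module K M] [LieRingModule L M]
    [LieModule K L M] [FiniteDimensional K M] {e f : L} {m : M} {c : K} (hc : c ≠ 0)
    (he : ⁅⁅e, f⁆, e⁆ = -(c • e)) (hf : ⁅⁅e, f⁆, f⁆ = c • f)
    (hm : ⁅⁅e, f⁆, m⁆ = c • m) (hem : ⁅e, m⁆ = 0) : m = 0 := by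
  by_contra hm0
  have hef : ⁅e, f⁆ ≠ 0 := by
    rintro hef
    rw [hef, zero_lie, eq_comm, smul_eq_zero] at hm
    exact hm0 (hm.resolve_left hc)
  have t : IsSl2Triple (-(2 / c) • ⁅e, f⁆) e (-(2 / c) • f) :=
    { h_ne_zero := smul_ne_zero (by simp [hc]) hef
      lie_e_f := by rw [lie_smul]
      lie_h_e_nsmul := by
        rw [smul_lie, he, smul_neg, neg_smul, neg_neg, smul_smul, div_mul_cancel₀ _ hc, two_smul,
          two_nsmul]
      lie_h_f_nsmul := by
        rw [lie_smul, smul_lie, hf, smul_smul, smul_smul,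
          show -(2 / c) * -(2 / c) * c = -(2 * -(2 / c)) by field_simp, neg_smul, mul_smul,
          two_smul, two_nsmul] }
  have P : t.HasPrimitiveVectorWith m (-2 : K) :=
    { ne_zero := hm0
      lie_h := by rw [smul_lie, hm, smul_smul, neg_mul, div_mul_cancel₀ _ hc, neg_smul]
      lie_e := hem }
  obtain ⟨n, hn⟩ := P.exists_nat
  have h2 : ((n + 2 : ℕ) : K) = 0 := by push_cast; linear_combination -hn
  exact absurd (Nat.cast_eq_zero.mp h2) (by omega)

section RestrictedRoots

variable {𝔤 : Type} [LieRing 𝔤] [LieAlgebra ℝ 𝔤] {σ : 𝔤 →ₗ⁅ℝ⁆ 𝔤} {𝔞 : LieSubalgebra ℝ 𝔤}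
  {lam mu : Module.Dual ℝ 𝔞}

lemma mem_rootSpace'_zero_iff {Z : 𝔤} : Z ∈ rootSpace' 𝔞 0 ↔ ∀ H : 𝔞, ⁅(H : 𝔤), Z⁆ = 0 := by
  simp [rootSpace']

lemma lie_mem_rootSpace' {X Y : 𝔤} (hX : X ∈ rootSpace' 𝔞 lam) (hY : Y ∈ rootSpace' 𝔞 mu) :
    ⁅X, Y⁆ ∈ rootSpace' 𝔞 (lam + mu) := fun H => by
  rw [leibniz_lie, hX H, hY H, smul_lie, lie_smul, LinearMap.add_apply, add_smul]

lemma map_mem_rootSpace'_neg (h𝔞p : ∀ X ∈ 𝔞, σ X = -X) {X : 𝔤}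
    (hX : X ∈ rootSpace' 𝔞 lam) : σ X ∈ rootSpace' 𝔞 (-lam) := fun H => by
  have h := σ.map_lie H X
  rw [hX H, map_smul, h𝔞p _ H.2, neg_lie] at h
  rw [LinearMap.neg_apply, neg_smul, h, neg_neg]

lemma mem_of_mem_rootSpace'_zero_of_map_eq_neg
    (h𝔞ab : ∀ X Y : 𝔤, X ∈ 𝔞 → Y ∈ 𝔞 → ⁅X, Y⁆ = 0) (h𝔞p : ∀ X ∈ 𝔞, σ X = -X)
    (h𝔞max : ∀ 𝔟 : LieSubalgebra ℝ 𝔤, (∀ X Y : 𝔤, X ∈ 𝔟 → Y ∈ 𝔟 → ⁅X, Y⁆ = 0) →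
      (∀ X ∈ 𝔟, σ X = -X) → 𝔞 ≤ 𝔟 → 𝔟 = 𝔞)
    {Z : 𝔤} (hZ : Z ∈ rootSpace' 𝔞 0) (hσZ : σ Z = -Z) : Z ∈ 𝔞 := by
  rw [mem_rootSpace'_zero_iff] at hZ
  have mem_sup : ∀ x ∈ 𝔞.toSubmodule ⊔ ℝ ∙ Z, ∃ a ∈ 𝔞, ∃ t : ℝ, x = a + t • Z := by
    intro x hx
    obtain ⟨a, ha, z, hz, rfl⟩ := Submodule.mem_sup.mp hx
    obtain ⟨t, rfl⟩ := Submodule.mem_span_singleton.mp hz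
    exact ⟨a, ha, t, rfl⟩
  have abelian : ∀ x y : 𝔤, x ∈ 𝔞.toSubmodule ⊔ ℝ ∙ Z → y ∈ 𝔞.toSubmodule ⊔ ℝ ∙ Z →
      ⁅x, y⁆ = 0 := by
    intro x y hx hy
    obtain ⟨a, ha, t, rfl⟩ := mem_sup x hx
    obtain ⟨b, hb, s, rfl⟩ := mem_sup y hy
    have hZb : ⁅Z, b⁆ = 0 := by rw [← lie_skew, hZ ⟨b, hb⟩, neg_zero]
    simp only [lie_add, add_lie, lie_smul, smul_lie, h𝔞ab a b ha hb, hZ ⟨a, ha⟩, hZb,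
      lie_self, smul_zero, add_zero]
  let 𝔟 : LieSubalgebra ℝ 𝔤 :=
    { toSubmodule := 𝔞.toSubmodule ⊔ ℝ ∙ Z
      lie_mem' := fun {x y} hx hy => abelian x y hx hy ▸ Submodule.zero_mem _ }
  have h𝔟p : ∀ x ∈ 𝔟, σ x = -x := by
    intro x hx
    obtain ⟨a, ha, t, rfl⟩ := mem_sup x hx
    rw [map_add, map_smul, h𝔞p a ha, hσZ, smul_neg, neg_add]
  have hZ𝔟 : Z ∈ 𝔟 := Submodule.mem_sup_right (Submodule.mem_span_singleton_self Z)
  rwa [h𝔞max 𝔟 abelian h𝔟p fun x hx => Submodule.mem_sup_left hx] at hZ𝔟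

lemma map_eq_neg_of_mSub_eq_bot (hσinv : ∀ X, σ (σ X) = X) (h𝔞p : ∀ X ∈ 𝔞, σ X = -X)
    (hm : mSub σ 𝔞 = ⊥) {Z : 𝔤} (hZ : Z ∈ rootSpace' 𝔞 0) : σ Z = -Z := by
  have hσZ : σ Z ∈ rootSpace' 𝔞 0 :=
    neg_zero (G := Module.Dual ℝ 𝔞) ▸ map_mem_rootSpace'_neg h𝔞p hZ
  have hk : Z + σ Z ∈ mSub σ 𝔞 := ⟨by rw [map_add, hσinv, add_comm],
    mem_rootSpace'_zero_iff.mp ((rootSpace' 𝔞 0).add_mem hZ hσZ)⟩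
  rw [hm, Submodule.mem_bot] at hk
  exact eq_neg_of_add_eq_zero_right hk

lemma killingForm_lie_apply_of_mem_rootSpace' {U : 𝔤} (hU : U ∈ rootSpace' 𝔞 lam) (A : 𝔤)
    (H : 𝔞) : killingForm ℝ 𝔤 ⁅A, U⁆ H = -(lam H * killingForm ℝ 𝔤 A U) := by
  rw [LieModule.traceForm_apply_lie_apply, ← lie_skew, hU H]
  simp [mul_comm]

lemma killingForm_self_pos_of_map_eq_neg
    (hσpos : ∀ X : 𝔤, X ≠ 0 → 0 < -(killingForm ℝ 𝔤 X (σ X)))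
    {Z : 𝔤} (hσZ : σ Z = -Z) (hZ : Z ≠ 0) : 0 < killingForm ℝ 𝔤 Z Z := by
  simpa [hσZ] using hσpos Z hZ

lemma eq_zero_of_lie_eq_smul_of_map_eq_self
    (hσpos : ∀ X : 𝔤, X ≠ 0 → 0 < -(killingForm ℝ 𝔤 X (σ X)))
    {Z X : 𝔤} {c : ℝ} (hσZ : σ Z = Z) (hX : X ≠ 0) (h : ⁅Z, X⁆ = c • X) : c = 0 := by
  have skew := LieModule.traceForm_apply_lie_apply' ℝ 𝔤 𝔤 Z X (σ X)
  rw [← hσZ, ← σ.map_lie, hσZ, h, map_smul] at skew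
  simp only [map_smul, LinearMap.smul_apply, smul_eq_mul] at skew
  have hκ : killingForm ℝ 𝔤 X (σ X) ≠ 0 := by linarith [hσpos X hX]
  exact (mul_eq_zero.mp (by linarith : c * killingForm ℝ 𝔤 X (σ X) = 0)).resolve_right hκ

lemma lie_eq_zero_of_mem_mSub_of_finrank_rootSpace'_eq_one
    (hσpos : ∀ X : 𝔤, X ≠ 0 → 0 < -(killingForm ℝ 𝔤 X (σ X)))
    (hdim : Module.finrank ℝ (rootSpace' 𝔞 lam) = 1) {Z X : 𝔤} (hZ : Z ∈ mSub σ 𝔞)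
    (hX : X ∈ rootSpace' 𝔞 lam) : ⁅Z, X⁆ = 0 := by
  rcases eq_or_ne X 0 with rfl | hX0
  · exact lie_zero Z
  have hZX : ⁅Z, X⁆ ∈ rootSpace' 𝔞 lam :=
    zero_add lam ▸ lie_mem_rootSpace' (mem_rootSpace'_zero_iff.mpr hZ.2) hX
  obtain ⟨c, hc⟩ := exists_smul_eq_of_finrank_eq_one hdim (x := ⟨X, hX⟩)
    (by simpa using hX0) ⟨_, hZX⟩
  have hc' : ⁅Z, X⁆ = c • X := congrArg Subtype.val hc.symm
  rw [hc', eq_zero_of_lie_eq_smul_of_map_eq_self hσpos hZ.1 hX0 hc', zero_smul]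

lemma apply_lie_map_self_ne_zero (hσpos : ∀ X : 𝔤, X ≠ 0 → 0 < -(killingForm ℝ 𝔤 X (σ X)))
    (h𝔞p : ∀ X ∈ 𝔞, σ X = -X) (hlam : lam ≠ 0) {X : 𝔤} (hX : X ∈ rootSpace' 𝔞 lam)
    (hX0 : X ≠ 0) (hW : ⁅σ X, X⁆ ∈ 𝔞) : lam ⟨⁅σ X, X⁆, hW⟩ ≠ 0 := by
  have hκX : killingForm ℝ 𝔤 (σ X) X ≠ 0 := by
    rw [LieModule.traceForm_comm]; linarith [hσpos X hX0]
  have hκW := killingForm_lie_apply_of_mem_rootSpace' hX (σ X)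
  have hW0 : ⁅σ X, X⁆ ≠ 0 := by
    obtain ⟨H, hH⟩ : ∃ H, lam H ≠ 0 := by simpa [DFunLike.ne_iff] using hlam
    intro h0
    have := hκW H
    rw [h0, map_zero, LinearMap.zero_apply, eq_comm, neg_eq_zero] at this
    exact mul_ne_zero hH hκX this
  intro hlamW
  have := killingForm_self_pos_of_map_eq_neg hσpos (h𝔞p _ hW) hW0
  have hWW := hκW ⟨_, hW⟩
  simp only [hlamW, zero_mul, neg_zero] at hWW
  exact this.ne' hWW

variable [Module.Finite ℝ 𝔤]

lemma eq_zero_of_killingForm_map_eq_zero (hσinv : ∀ X, σ (σ X) = X)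
    (hσpos : ∀ X : 𝔤, X ≠ 0 → 0 < -(killingForm ℝ 𝔤 X (σ X)))
    (h𝔞ab : ∀ X Y : 𝔤, X ∈ 𝔞 → Y ∈ 𝔞 → ⁅X, Y⁆ = 0) (h𝔞p : ∀ X ∈ 𝔞, σ X = -X)
    (h𝔞max : ∀ 𝔟 : LieSubalgebra ℝ 𝔤, (∀ X Y : 𝔤, X ∈ 𝔟 → Y ∈ 𝔟 → ⁅X, Y⁆ = 0) →
      (∀ X ∈ 𝔟, σ X = -X) → 𝔞 ≤ 𝔟 → 𝔟 = 𝔞)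
    (hm : mSub σ 𝔞 = ⊥) (hlam : lam ≠ 0) {X Y : 𝔤} (hX : X ∈ rootSpace' 𝔞 lam) (hX0 : X ≠ 0)
    (hY : Y ∈ rootSpace' 𝔞 lam) (horth : killingForm ℝ 𝔤 (σ X) Y = 0) : Y = 0 := by
  have hσX := map_mem_rootSpace'_neg h𝔞p hX
  have lie_mem : ∀ {U}, U ∈ rootSpace' 𝔞 lam → ⁅σ X, U⁆ ∈ 𝔞 := fun hU => by
    have hU0 := neg_add_cancel lam ▸ lie_mem_rootSpace' hσX hU
    exact mem_of_mem_rootSpace'_zero_of_map_eq_neg h𝔞ab h𝔞p h𝔞max hU0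
      (map_eq_neg_of_mSub_eq_bot hσinv h𝔞p hm hU0)
  have hV : ⁅σ X, Y⁆ = 0 := by
    by_contra hV0
    have hpos := killingForm_self_pos_of_map_eq_neg hσpos (h𝔞p _ (lie_mem hY)) hV0
    have hVV := killingForm_lie_apply_of_mem_rootSpace' hY (σ X) ⟨_, lie_mem hY⟩
    rw [horth, mul_zero, neg_zero] at hVV
    exact hpos.ne' hVV
  set W : 𝔞 := ⟨_, lie_mem hX⟩
  refine eq_zero_of_lie_eq_zero_of_lie_lie_eq_smul
    (apply_lie_map_self_ne_zero hσpos h𝔞p hlam hX hX0 (lie_mem hX)) ?_ (hX W) (hY W) hV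
  rw [hσX W, LinearMap.neg_apply, neg_smul]

lemma finrank_rootSpace'_eq_one_of_mSub_eq_bot (hσinv : ∀ X, σ (σ X) = X)
    (hσpos : ∀ X : 𝔤, X ≠ 0 → 0 < -(killingForm ℝ 𝔤 X (σ X)))
    (h𝔞ab : ∀ X Y : 𝔤, X ∈ 𝔞 → Y ∈ 𝔞 → ⁅X, Y⁆ = 0) (h𝔞p : ∀ X ∈ 𝔞, σ X = -X)
    (h𝔞max : ∀ 𝔟 : LieSubalgebra ℝ 𝔤, (∀ X Y : 𝔤, X ∈ 𝔟 → Y ∈ 𝔟 → ⁅X, Y⁆ = 0) →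
      (∀ X ∈ 𝔟, σ X = -X) → 𝔞 ≤ 𝔟 → 𝔟 = 𝔞)
    (hm : mSub σ 𝔞 = ⊥) (hlam : lam ≠ 0) (hne : rootSpace' 𝔞 lam ≠ ⊥) :
    Module.finrank ℝ (rootSpace' 𝔞 lam) = 1 := by
  obtain ⟨X, hX, hX0⟩ := (Submodule.ne_bot_iff _).mp hne
  have hinj : Function.Injective ((killingForm ℝ 𝔤 (σ X)).domRestrict (rootSpace' 𝔞 lam)) :=
    (injective_iff_map_eq_zero _).mpr fun Y hY => Subtype.ext <|
      eq_zero_of_killingForm_map_eq_zero hσinv hσpos h𝔞ab h𝔞p h𝔞max hm hlam hX hX0 Y.2 hY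
  exact le_antisymm ((LinearMap.finrank_le_finrank_of_injective hinj).trans_eq
    (Module.finrank_self ℝ)) (Submodule.one_le_finrank_iff.mpr hne)

end RestrictedRoots

theorem statement1_general
    (𝔤 : Type) [LieRing 𝔤] [LieAlgebra ℝ 𝔤] [Module.Finite ℝ 𝔤]
    -- `σ` is a Cartan involution of `𝔤`:
    (σ : 𝔤 →ₗ⁅ℝ⁆ 𝔤) (hσinv : ∀ X, σ (σ X) = X)
    (hσpos : ∀ X : 𝔤, X ≠ 0 → 0 < -(killingForm ℝ 𝔤 X (σ X)))
    -- `𝔞` is a maximal abelian subalgebra contained in `𝔭 = {X : σ X = -X}`: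
    (𝔞 : LieSubalgebra ℝ 𝔤)
    (h𝔞ab : ∀ X Y : 𝔤, X ∈ 𝔞 → Y ∈ 𝔞 → ⁅X, Y⁆ = 0)
    (h𝔞p : ∀ X ∈ 𝔞, σ X = -X)
    (h𝔞max : ∀ 𝔟 : LieSubalgebra ℝ 𝔤, (∀ X Y : 𝔤, X ∈ 𝔟 → Y ∈ 𝔟 → ⁅X, Y⁆ = 0) →
      (∀ X ∈ 𝔟, σ X = -X) → 𝔞 ≤ 𝔟 → 𝔟 = 𝔞) :
    -- if `λ ∈ Σ` with `dim 𝔤_λ = 1`, then `[𝔪, 𝔤_λ] = 0` …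
    (∀ lam : Module.Dual ℝ 𝔞, lam ≠ 0 → Module.finrank ℝ (rootSpace' 𝔞 lam) = 1 →
      ∀ Z ∈ mSub σ 𝔞, ∀ X ∈ rootSpace' 𝔞 lam, ⁅Z, X⁆ = 0) ∧
    -- … and if `𝔪 = 0`, then every restricted root space is one-dimensional:
    (mSub σ 𝔞 = ⊥ → ∀ lam : Module.Dual ℝ 𝔞, lam ≠ 0 → rootSpace' 𝔞 lam ≠ ⊥ →
      Module.finrank ℝ (rootSpace' 𝔞 lam) = 1) := by
  exact ⟨fun _ _ hdim _ hZ _ hX =>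
      lie_eq_zero_of_mem_mSub_of_finrank_rootSpace'_eq_one hσpos hdim hZ hX,
    fun hm _ hlam hne =>
      finrank_rootSpace'_eq_one_of_mSub_eq_bot hσinv hσpos h𝔞ab h𝔞p h𝔞max hm hlam hne⟩

/-- If `λ ∈ Σ` has `dim 𝔤_λ = 1`, then `[Z, X] = 0` for every `Z ∈ 𝔪` and
`X ∈ 𝔤_λ`.  Moreover, if `𝔪 = 0`, then every restricted root space is one-dimensional. -/
theorem statement1
    (𝔤 : Type) [LieRing 𝔤] [LieAlgebra ℝ 𝔤] [Module.Finite ℝ 𝔤]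
    [LieAlgebra.IsSemisimple ℝ 𝔤]
    -- `σ` is a Cartan involution of `𝔤`:
    (σ : 𝔤 →ₗ⁅ℝ⁆ 𝔤) (hσinv : ∀ X, σ (σ X) = X)
    (hσpos : ∀ X : 𝔤, X ≠ 0 → 0 < -(killingForm ℝ 𝔤 X (σ X)))
    -- `𝔞` is a maximal abelian subalgebra contained in `𝔭 = {X : σ X = -X}`:
    (𝔞 : LieSubalgebra ℝ 𝔤)
    (h𝔞ab : ∀ X Y : 𝔤, X ∈ 𝔞 → Y ∈ 𝔞 → ⁅X, Y⁆ = 0)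
    (h𝔞p : ∀ X ∈ 𝔞, σ X = -X)
    (h𝔞max : ∀ 𝔟 : LieSubalgebra ℝ 𝔤, (∀ X Y : 𝔤, X ∈ 𝔟 → Y ∈ 𝔟 → ⁅X, Y⁆ = 0) →
      (∀ X ∈ 𝔟, σ X = -X) → 𝔞 ≤ 𝔟 → 𝔟 = 𝔞) :
    -- if `λ ∈ Σ` with `dim 𝔤_λ = 1`, then `[𝔪, 𝔤_λ] = 0` …
    (∀ lam : Module.Dual ℝ 𝔞, lam ≠ 0 → Module.finrank ℝ (rootSpace' 𝔞 lam) = 1 →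
      ∀ Z ∈ mSub σ 𝔞, ∀ X ∈ rootSpace' 𝔞 lam, ⁅Z, X⁆ = 0) ∧
    -- … and if `𝔪 = 0`, then every restricted root space is one-dimensional:
    (mSub σ 𝔞 = ⊥ → ∀ lam : Module.Dual ℝ 𝔞, lam ≠ 0 → rootSpace' 𝔞 lam ≠ ⊥ →
      Module.finrank ℝ (rootSpace' 𝔞 lam) = 1) :=
  statement1_general 𝔤 σ hσinv hσpos 𝔞 h𝔞ab h𝔞p h𝔞max
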